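/- The family R_1 is a D_n^ℤ-basic-separator set: every K ∈ R_1 is a regular language with K ∩ D_n^ℤ = ∅, and every regular language L ⊆ Σ_n^* with L ∩ D_n^ℤ = ∅ is contained in a finite union of members of R_1. -/

import Mathlib

set_option linter.unusedVariables false

/-! ### Alphabet, effects, Dyck languages -/

abbrev Sig (n : ℕ) := Fin n × Bool

def letterEff {n : ℕ} (a : Sig n) : Fin n → ℤ :=
  fun j => if j = a.1 then (if a.2 then 1 else -1) else 0

def wordEff {n : ℕ} (w : List (Sig n)) : Fin n → ℤ :=
  (w.map letterEff).sum

/-- The Dyck language `D_n`. -/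
def Dyck (n : ℕ) : Language (Sig n) :=
  {w | wordEff w = 0 ∧ ∀ u, u <+: w → ∀ j, 0 ≤ wordEff u j}

/-- The coverability Dyck language `D_n^↑`. -/
def CovDyck (n : ℕ) : Language (Sig n) :=
  {w | ∀ u, u <+: w → ∀ j, 0 ≤ wordEff u j}

/-- The `ℤ`-Dyck language `D_n^ℤ`. -/
def ZDyck (n : ℕ) : Language (Sig n) :=
  {w | wordEff w = 0}

/-! ### VASS -/

structure VASS (A : Type) where
  Q : Type
  C : Type
  finQ : Finite Q
  finC : Finite C
  E : Set (Q × Option A × (C → ℤ) × Q)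
  finE : E.Finite

inductive VASS.NRun {A : Type} (V : VASS A) :
    (V.Q × (V.C → ℕ)) → List A → (V.Q × (V.C → ℕ)) → Prop
  | refl (cfg : V.Q × (V.C → ℕ)) : VASS.NRun V cfg [] cfg
  | step {q : V.Q} {c : V.C → ℕ} {a : Option A} {d : V.C → ℤ} {q' : V.Q}
      {c' : V.C → ℕ} {w : List A} {last : V.Q × (V.C → ℕ)} :
      (q, a, d, q') ∈ V.E →
      (∀ j, (c' j : ℤ) = (c j : ℤ) + d j) →
      VASS.NRun V (q', c') w last →
      VASS.NRun V (q, c) (a.toList ++ w) last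

/-- An initialized VASS: generalized initial/final configurations,
with `none` playing the role of `ω`. -/
structure InitVASS (A : Type) extends VASS A where
  qin : Q
  qout : Q
  cin : C → Option ℕ
  cout : C → Option ℕ

/-- The reachability language of an initialized VASS. -/
def InitVASS.lang {A : Type} (V : InitVASS A) : Language A :=
  {w | ∃ c0 cl : V.C → ℕ,
      V.toVASS.NRun (V.qin, c0) w (V.qout, cl) ∧
      (∀ j m, V.cin j = some m → c0 j = m) ∧
      (∀ j m, V.cout j = some m → cl j = m)}

/-! ### Transducers -/

structure Transducer (G A : Type) where
  Q : Type
  finQ : Finite Q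
  start : Q
  accept : Set Q
  trans : Set (Q × (Option G × Option A) × Q)
  finT : trans.Finite

inductive Transducer.Path {G A : Type} (T : Transducer G A) :
    T.Q → List G → List A → T.Q → Prop
  | refl (q : T.Q) : Transducer.Path T q [] [] q
  | step {q q' qf : T.Q} {g : Option G} {a : Option A} {u : List G} {v : List A} :
      (q, (g, a), q') ∈ T.trans →
      Transducer.Path T q' u v qf →
      Transducer.Path T q (g.toList ++ u) (a.toList ++ v) qf

/-- The relation recognized by a transducer. -/
def Transducer.rel {G A : Type} (T : Transducer G A) (u : List G) (v : List A) : Prop :=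
  ∃ qf ∈ T.accept, T.Path T.start u v qf

/-- `T⁻¹(L)`. -/
def Transducer.invImage {G A : Type} (T : Transducer G A) (L : Language A) : Language G :=
  {u | ∃ v ∈ L, T.rel u v}

/-! ### Regular separability -/

def RegSep {A : Type} (L1 L2 : Language A) : Prop :=
  ∃ R : Language A, R.IsRegular ∧ L1 ≤ R ∧ ∀ w ∈ R, w ∉ L2

/-! ### Linear sets and regular approximations -/

structure LinSet (n : ℕ) where
  base : Fin n → ℤ
  periods : Set (Fin n → ℤ)
  finP : periods.Finite

def LinSet.toSet {n : ℕ} (L : LinSet n) : Set (Fin n → ℤ) :=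
  {x | ∃ p ∈ AddSubmonoid.closure L.periods, x = L.base + p}

def inBox {n : ℕ} (k : ℕ) (x : Fin n → ℤ) : Prop :=
  ∀ j, -(k : ℤ) ≤ x j ∧ x j ≤ (k : ℤ)

/-- Reachability in the ε-NFA underlying the `k`-th regular approximation of `L`:
states are vectors in `[-k,k]^n`, letters move by their effect, ε-transitions
subtract a period. -/
inductive KReach {n : ℕ} (L : LinSet n) (k : ℕ) :
    (Fin n → ℤ) → List (Sig n) → (Fin n → ℤ) → Prop
  | refl (x : Fin n → ℤ) (h : inBox k x) : KReach L k x [] x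
  | letter {x y : Fin n → ℤ} {w : List (Sig n)} (a : Sig n)
      (h : inBox k x) (h' : inBox k (x + letterEff a)) :
      KReach L k (x + letterEff a) w y → KReach L k x (a :: w) y
  | eps {x y : Fin n → ℤ} {w : List (Sig n)} {p : Fin n → ℤ}
      (hp : p ∈ L.periods) (h : inBox k x) (h' : inBox k (x - p)) :
      KReach L k (x - p) w y → KReach L k x w y

/-- The `k`-th regular approximation `K^k(L)`. -/
def KApprox {n : ℕ} (L : LinSet n) (k : ℕ) : Language (Sig n) :=
  {w | ∃ y, KReach L k 0 w y ∧ y ∈ L.toSet}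

/-! ### The `⊕⁺` operation and the families `R_ℓ` -/

def posPlus {n : ℕ} (K L : Set (Fin n → ℤ)) : Set (Fin n → ℤ) :=
  {x | (∀ j, 0 ≤ x j) ∧ ∃ a ∈ K, (∀ j, 0 ≤ a j) ∧ ∃ b ∈ L, x = a + b}

def posFoldAux {n : ℕ} : Set (Fin n → ℤ) → List (Set (Fin n → ℤ)) → Set (Fin n → ℤ)
  | S, [] => S
  | S, L :: Ls => posFoldAux (posPlus S L) Ls

/-- `posFold [L₁, …, L_ℓ] = L₁ ⊕⁺ ⋯ ⊕⁺ L_ℓ` (associated to the left); for `ℓ = 1`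
it is `L₁` itself. -/
def posFold {n : ℕ} : List (Set (Fin n → ℤ)) → Set (Fin n → ℤ)
  | [] => ∅
  | L :: Ls => posFoldAux L Ls

/-- The family `R_ℓ`. -/
def RFam (n ℓ : ℕ) : Set (Language (Sig n)) :=
  {K | ∃ (k : ℕ) (Ls : List (LinSet n)), Ls.length = ℓ ∧
      (0 : Fin n → ℤ) ∉ posFold (Ls.map LinSet.toSet) ∧
      K = (Ls.map (fun L => KApprox L k)).prod}

/-- `R_{≤ m} = ⋃_{1 ≤ i ≤ m} R_i`. -/
def RleFam (n m : ℕ) : Set (Language (Sig n)) :=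
  ⋃ i ∈ Set.Icc 1 m, RFam n i

/-- `R = ⋃_{ℓ ≥ 1} R_ℓ`. -/
def RAll (n : ℕ) : Set (Language (Sig n)) :=
  ⋃ i ∈ Set.Ici 1, RFam n i

/-! ### Basic separator sets -/

def IsBasicSepSet {n : ℕ} (S : Language (Sig n)) (B : Set (Language (Sig n))) : Prop :=
  (∀ K ∈ B, K.IsRegular ∧ ∀ w ∈ K, w ∉ S) ∧
  (∀ L : Language (Sig n), L.IsRegular → (∀ w ∈ L, w ∉ S) →
    ∃ F ⊆ B, F.Finite ∧ ∀ w ∈ L, ∃ K ∈ F, w ∈ K)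

/-! Extra defs for specific statements -/

/-- `u ∼_A v`: the words induce the same state transformation in the DFA `M`. -/
def simEq {α σ : Type} (M : DFA α σ) (u v : List α) : Prop :=
  ∀ p : σ, M.evalFrom p u = M.evalFrom p v

/-- Assemble `w₀ m₁ w₁ ⋯ m_k w_k` over `Σ ⊎ Σ#` (`Sum.inl` = plain, `Sum.inr` = marked). -/
def assemble {α : Type} : List (List α) → List α → List (α ⊕ α)
  | [], _ => []
  | w :: _, [] => w.map Sum.inl
  | w :: ws, m :: ms => w.map Sum.inl ++ Sum.inr m :: assemble ws ms

/-- The set of effects of a language. -/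
def effSet {n : ℕ} (L : Language (Sig n)) : Set (Fin n → ℤ) :=
  {v | ∃ w ∈ L, wordEff w = v}

/-- `Mod(μ, v)`. -/
def ModLang (n μ : ℕ) (v : Fin n → ℤ) : Language (Sig n) :=
  {w | ∀ j, wordEff w j ≡ v j [ZMOD (μ : ℤ)]}

/-- `ModSet(μ, v)`: base `v`, periods `{±μ·e_i}`. -/
def ModSet (n μ : ℕ) (v : Fin n → ℤ) : LinSet n where
  base := v
  periods := (Set.range fun i : Fin n => (μ : ℤ) • Pi.single i (1 : ℤ)) ∪
    (Set.range fun i : Fin n => -((μ : ℤ) • Pi.single i (1 : ℤ)))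
  finP := (Set.finite_range _).union (Set.finite_range _)

/-- `Cov(k, i)`. -/
def CovLang (n k : ℕ) (i : Fin n) : Language (Sig n) :=
  {x | ∃ w w', x = w ++ w' ∧ wordEff w i < 0 ∧
      ∀ u, u <+: w → u ≠ w → 0 ≤ wordEff u i ∧ wordEff u i ≤ (k : ℤ)}

/-- `L_{neg,i}`: base `-e_i`, periods `{±e_j : j ≠ i}`. -/
def LNeg (n : ℕ) (i : Fin n) : LinSet n where
  base := -Pi.single i 1
  periods := ((fun j : Fin n => Pi.single j (1 : ℤ)) '' {j | j ≠ i}) ∪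
    ((fun j : Fin n => -Pi.single j (1 : ℤ)) '' {j | j ≠ i})
  finP := ((Set.toFinite _).image _).union ((Set.toFinite _).image _)

/-- `Z`: base `0`, periods `{±e_j}`. -/
def ZSet (n : ℕ) : LinSet n where
  base := 0
  periods := (Set.range fun j : Fin n => Pi.single j (1 : ℤ)) ∪
    (Set.range fun j : Fin n => -Pi.single j (1 : ℤ))
  finP := (Set.finite_range _).union (Set.finite_range _)

/-! The language `C_ℓ` over `Σ₂` -/

def ltrA1 : Sig 2 := (0, true)
def ltrA2 : Sig 2 := (1, true)
def ltrB1 : Sig 2 := (0, false)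
def ltrB2 : Sig 2 := (1, false)

def fwdWord (j : ℕ) : List (Sig 2) := ltrA1 :: List.replicate j ltrA2
def bwdWord (j : ℕ) : List (Sig 2) := ltrB1 :: List.replicate j ltrB2

def segLang (j : ℕ) : Language (Sig 2) :=
  KStar.kstar ({fwdWord j, bwdWord j} : Language (Sig 2))

def aPlusLang : Language (Sig 2) :=
  {w | ∃ m : ℕ, 0 < m ∧ w = List.replicate m ltrA1}

def CLang (ℓ : ℕ) : Language (Sig 2) :=
  aPlusLang * ((List.range ℓ).map (fun j => segLang (j + 1))).prod

/-!
A word accepted by the ε-NFA of `K^k(L)` ends with a counter in `L`, and since ε-moves only subtract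
periods its effect lies in `L + P^* = L`; so `K^k(L)` avoids `D_n^ℤ` when `0 ∉ L`.

Conversely, let a DFA with state set `σ` accept a language disjoint from `D_n^ℤ`. Call a run reduced
if no two of its prefixes end in the same state having visited the same set of states; it then has
length `< |𝒫(σ) × σ| =: K`. A word `w` can be read while maintaining a reduced run `s` that ends in
the same state and has visited the same states as the prefix read so far: append each letter, and
when this breaks reducedness cut out the cycle just closed, which the ε-NFA of `K^K` does by
subtracting the cycle's effect. So `w ∈ K^K(eff(s) + C^*)`, with `C` the effects of cycles of length
`≤ K` at states visited by `s`. Splicing such cycles into `s` realises every vector of this linear set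
as the effect of an accepted word, so it avoids `0`; and there are finitely many such `s`.
-/

section WordEff

variable {n : ℕ}

@[simp]
lemma wordEff_nil : wordEff ([] : List (Sig n)) = 0 := rfl

@[simp]
lemma wordEff_cons (a : Sig n) (w : List (Sig n)) :
    wordEff (a :: w) = letterEff a + wordEff w := by
  simp [wordEff]

@[simp]
lemma wordEff_append (u v : List (Sig n)) : wordEff (u ++ v) = wordEff u + wordEff v := by
  simp [wordEff]

lemma abs_letterEff_le (a : Sig n) (j : Fin n) : |letterEff a j| ≤ 1 := by
  unfold letterEff
  split_ifs <;> simp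

lemma abs_wordEff_le (w : List (Sig n)) (j : Fin n) : |wordEff w j| ≤ w.length := by
  induction w with
  | nil => simp
  | cons a w ih =>
    have := abs_letterEff_le a j
    simp only [wordEff_cons, Pi.add_apply, List.length_cons, Nat.cast_add, Nat.cast_one]
    linarith [abs_add_le (letterEff a j) (wordEff w j)]

lemma inBox_zero (k : ℕ) : inBox k (0 : Fin n → ℤ) := fun _ => by simp

lemma inBox_wordEff {k : ℕ} {w : List (Sig n)} (h : w.length ≤ k) : inBox k (wordEff w) :=
  fun j => abs_le.mp ((abs_wordEff_le w j).trans (by exact_mod_cast h))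

lemma finite_setOf_inBox (k : ℕ) : {x : Fin n → ℤ | inBox k x}.Finite :=
  (Set.finite_Icc (fun _ => -(k : ℤ)) (fun _ => (k : ℤ))).subset
    fun _ hx => ⟨fun j => (hx j).1, fun j => (hx j).2⟩

end WordEff

namespace KReach

variable {n : ℕ} {L : LinSet n} {k : ℕ} {x y z : Fin n → ℤ} {u v : List (Sig n)}

lemma inBox_right (h : KReach L k x u y) : inBox k y := by
  induction h with
  | refl _ h => exact h
  | letter _ _ _ _ ih => exact ih
  | eps _ _ _ _ ih => exact ih

lemma append (h₁ : KReach L k x u y) (h₂ : KReach L k y v z) : KReach L k x (u ++ v) z := by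
  induction h₁ with
  | refl => exact h₂
  | letter a h h' _ ih => exact .letter a h h' (ih h₂)
  | eps hp h h' _ ih => exact .eps hp h h' (ih h₂)

lemma exists_add_wordEff_eq (h : KReach L k x u y) :
    ∃ s ∈ AddSubmonoid.closure L.periods, x + wordEff u = y + s := by
  induction h with
  | refl => exact ⟨0, zero_mem _, by simp⟩
  | letter a _ _ _ ih =>
    obtain ⟨s, hs, he⟩ := ih
    exact ⟨s, hs, by rw [wordEff_cons, ← he]; abel⟩
  | eps hp _ _ _ ih =>
    obtain ⟨s, hs, he⟩ := ih
    exact ⟨s + _, add_mem hs (AddSubmonoid.subset_closure hp), by rw [← add_assoc, ← he]; abel⟩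

end KReach

section Regularity

variable {n : ℕ}

def approxεNFA (L : LinSet n) (k : ℕ) : εNFA (Sig n) {x : Fin n → ℤ // inBox k x} where
  step x
    | some a => {y | (y : Fin n → ℤ) = x + letterEff a}
    | none => {y | ∃ p ∈ L.periods, (y : Fin n → ℤ) = x - p}
  start := {x | (x : Fin n → ℤ) = 0}
  accept := {x | (x : Fin n → ℤ) ∈ L.toSet}

variable {L : LinSet n} {k : ℕ}

lemma KReach.exists_isPath {x y : Fin n → ℤ} {w : List (Sig n)} (h : KReach L k x w y)
    (hx : inBox k x) (hy : inBox k y) :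
    ∃ p : List (Option (Sig n)), p.reduceOption = w ∧
      (approxεNFA L k).IsPath ⟨x, hx⟩ ⟨y, hy⟩ p := by
  induction h with
  | refl => exact ⟨[], rfl, .nil _⟩
  | letter a _ h' _ ih =>
    obtain ⟨p, rfl, hp⟩ := ih h' hy
    exact ⟨some a :: p, List.reduceOption_cons_of_some _ _, .cons _ _ _ _ _ rfl hp⟩
  | eps hq _ h' _ ih =>
    obtain ⟨p, rfl, hp⟩ := ih h' hy
    exact ⟨none :: p, List.reduceOption_cons_of_none _, .cons _ _ _ _ _ ⟨_, hq, rfl⟩ hp⟩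

lemma kReach_of_isPath {s t : {x : Fin n → ℤ // inBox k x}} {p : List (Option (Sig n))}
    (h : (approxεNFA L k).IsPath s t p) : KReach L k s p.reduceOption t := by
  induction h with
  | nil s => exact .refl _ s.2
  | cons t s _ a _ hstep _ ih =>
    cases a with
    | some a =>
      rw [List.reduceOption_cons_of_some]
      have hts : (t : Fin n → ℤ) = s + letterEff a := hstep
      exact .letter a s.2 (hts ▸ t.2) (hts ▸ ih)
    | none =>
      obtain ⟨q, hq, hts⟩ := hstep
      exact .eps hq s.2 (hts ▸ t.2) (hts ▸ ih)

lemma KApprox_eq_accepts : KApprox L k = (approxεNFA L k).accepts := by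
  ext w
  rw [εNFA.mem_accepts_iff_exists_path]
  constructor
  · rintro ⟨y, hreach, hy⟩
    obtain ⟨p, hp, hpath⟩ := hreach.exists_isPath (inBox_zero k) hreach.inBox_right
    exact ⟨_, _, p, rfl, hy, hp, hpath⟩
  · rintro ⟨s, t, p, hs, ht, rfl, hpath⟩
    exact ⟨t, hs ▸ kReach_of_isPath hpath, ht⟩

lemma KApprox_isRegular (L : LinSet n) (k : ℕ) : (KApprox L k).IsRegular := by
  have : Finite {x : Fin n → ℤ // inBox k x} := (finite_setOf_inBox k).to_subtype
  have := Fintype.ofFinite {x : Fin n → ℤ // inBox k x}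
  exact ⟨_, inferInstance, (approxεNFA L k).toNFA.toDFA,
    by rw [NFA.toDFA_correct, εNFA.toNFA_correct, KApprox_eq_accepts]⟩

end Regularity

section RFamOne

variable {n : ℕ}

lemma KApprox_disjoint_ZDyck {L : LinSet n} {k : ℕ} (h0 : (0 : Fin n → ℤ) ∉ L.toSet) :
    ∀ w ∈ KApprox L k, w ∉ ZDyck n := by
  rintro w ⟨y, hreach, p, hp, rfl⟩ (hw : wordEff w = 0)
  obtain ⟨s, hs, he⟩ := hreach.exists_add_wordEff_eq
  rw [hw, zero_add, add_assoc] at he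
  exact h0 ⟨p + s, add_mem hp hs, he⟩

lemma mem_RFam_one_iff {K : Language (Sig n)} :
    K ∈ RFam n 1 ↔ ∃ (k : ℕ) (L : LinSet n), (0 : Fin n → ℤ) ∉ L.toSet ∧ K = KApprox L k := by
  constructor
  · rintro ⟨k, Ls, hlen, h0, rfl⟩
    obtain ⟨L, rfl⟩ := List.length_eq_one_iff.mp hlen
    exact ⟨k, L, h0, by simp⟩
  · rintro ⟨k, L, h0, rfl⟩
    exact ⟨k, [L], rfl, h0, by simp⟩

end RFamOne

namespace DFA

variable {α σ : Type*}

def visitedFrom (M : DFA α σ) : σ → List α → Set σ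
  | q, [] => {q}
  | q, a :: u => insert q (M.visitedFrom (M.step q a) u)

def visited (M : DFA α σ) (u : List α) : Set σ := M.visitedFrom M.start u

variable (M : DFA α σ)

lemma self_mem_visitedFrom (q : σ) (u : List α) : q ∈ M.visitedFrom q u := by
  cases u <;> simp [visitedFrom]

lemma evalFrom_mem_visitedFrom (q : σ) (u : List α) : M.evalFrom q u ∈ M.visitedFrom q u := by
  induction u generalizing q with
  | nil => exact M.self_mem_visitedFrom q []
  | cons a u ih => exact Set.mem_insert_of_mem _ (ih _)

lemma visitedFrom_append (q : σ) (u v : List α) :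
    M.visitedFrom q (u ++ v) = M.visitedFrom q u ∪ M.visitedFrom (M.evalFrom q u) v := by
  induction u generalizing q with
  | nil => simp [visitedFrom, M.self_mem_visitedFrom]
  | cons a u ih => simp [visitedFrom, ih, Set.insert_union]

lemma exists_append_of_mem_visitedFrom {q r : σ} {u : List α} (h : r ∈ M.visitedFrom q u) :
    ∃ p s, u = p ++ s ∧ M.evalFrom q p = r := by
  induction u generalizing q with
  | nil => exact ⟨[], [], rfl, (Set.mem_singleton_iff.mp h).symm⟩
  | cons a u ih =>
    rcases Set.mem_insert_iff.mp h with rfl | h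
    · exact ⟨[], a :: u, rfl, rfl⟩
    · obtain ⟨p, s, rfl, hp⟩ := ih h
      exact ⟨a :: p, s, rfl, hp⟩

lemma eval_mem_visited (u : List α) : M.eval u ∈ M.visited u :=
  M.evalFrom_mem_visitedFrom _ u

lemma visited_append (u v : List α) :
    M.visited (u ++ v) = M.visited u ∪ M.visitedFrom (M.eval u) v :=
  M.visitedFrom_append _ u v

lemma exists_splice_cycle {x c : List α} {q : σ} (hq : q ∈ M.visited x)
    (hc : M.evalFrom q c = q) :
    ∃ x' s, x = x' ++ s ∧ M.eval (x' ++ c ++ s) = M.eval x ∧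
      M.visited x ⊆ M.visited (x' ++ c ++ s) := by
  obtain ⟨p, s, rfl, rfl⟩ := M.exists_append_of_mem_visitedFrom hq
  refine ⟨p, s, rfl, ?_, ?_⟩
  · simp only [eval, evalFrom_of_append, hc]
  · rw [visited_append, visited_append, visited_append, eval, evalFrom_of_append, hc]
    exact Set.union_subset_union_left _ Set.subset_union_left

/-- No cycle can be cut out of the run on `s` without losing a visited state. -/
def IsReduced (s : List α) : Prop :=
  Set.InjOn (fun p => (M.visited p, M.eval p)) {p | p <+: s}

variable {M}

lemma isReduced_nil : M.IsReduced [] := by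
  intro p hp q hq _
  rw [List.prefix_nil.mp hp, List.prefix_nil.mp hq]

lemma IsReduced.of_prefix {s t : List α} (ht : M.IsReduced t) (h : s <+: t) : M.IsReduced s :=
  ht.mono fun _ hp => List.IsPrefix.trans hp h

lemma IsReduced.length_lt [Finite σ] {s : List α} (hs : M.IsReduced s) :
    s.length < Nat.card (Set σ × σ) := by
  have hinj : Function.Injective
      fun i : Fin (s.length + 1) => (M.visited (s.take i), M.eval (s.take i)) := by
    intro i j hij
    have := congrArg List.length (hs (List.take_prefix _ _) (List.take_prefix _ _) hij)
    simp only [List.length_take] at this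
    omega
  simpa using Nat.card_le_card_of_injective _ hinj

lemma IsReduced.append_singleton_or {s : List α} (hs : M.IsReduced s) (a : α) :
    M.IsReduced (s ++ [a]) ∨
      ∃ p, p <+: s ∧ M.visited p = M.visited (s ++ [a]) ∧ M.eval p = M.eval (s ++ [a]) := by
  by_contra! h
  obtain ⟨hnot, hnew⟩ := h
  simp only [IsReduced, Set.InjOn, Set.mem_ofPred_eq, List.prefix_concat_iff] at hnot
  push Not at hnot
  obtain ⟨p, hp, q, hq, hpq, hne⟩ := hnot
  simp only [Prod.mk.injEq] at hpq
  rcases hp with rfl | hp <;> rcases hq with rfl | hq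
  · exact hne rfl
  · exact hnew q hq hpq.1.symm hpq.2.symm
  · exact hnew p hp hpq.1 hpq.2
  · exact hne (hs hp hq (Prod.ext hpq.1 hpq.2))

end DFA

section Covering

variable {n : ℕ} {σ : Type*} (M : DFA (Sig n) σ)

def cycleEffects (K : ℕ) (T : Set σ) : Set (Fin n → ℤ) :=
  {v | ∃ q ∈ T, ∃ c : List (Sig n), c.length ≤ K ∧ M.evalFrom q c = q ∧ wordEff c = v}

lemma cycleEffects_finite (K : ℕ) (T : Set σ) : (cycleEffects M K T).Finite :=
  ((List.finite_length_le _ K).image wordEff).subset fun _ ⟨_, _, c, hc, _, hv⟩ => ⟨c, hc, hv⟩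

lemma cycleEffects_mono (K : ℕ) {T T' : Set σ} (h : T ⊆ T') :
    cycleEffects M K T ⊆ cycleEffects M K T' :=
  fun _ ⟨q, hq, hc⟩ => ⟨q, h hq, hc⟩

def cycleLinSet (K : ℕ) (s : List (Sig n)) : LinSet n :=
  ⟨wordEff s, cycleEffects M K (M.visited s), cycleEffects_finite M K _⟩

lemma exists_eval_eq_wordEff_add {K : ℕ} {T : Set σ} {v : Fin n → ℤ}
    (hv : v ∈ AddSubmonoid.closure (cycleEffects M K T)) {x : List (Sig n)}
    (hT : T ⊆ M.visited x) :
    ∃ x', M.eval x' = M.eval x ∧ wordEff x' = wordEff x + v ∧ T ⊆ M.visited x' := by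
  induction hv using AddSubmonoid.closure_induction generalizing x with
  | mem v hv =>
    obtain ⟨q, hq, c, -, hc, rfl⟩ := hv
    obtain ⟨p, s, rfl, heval, hvis⟩ := M.exists_splice_cycle (hT hq) hc
    exact ⟨p ++ c ++ s, heval, by simp only [wordEff_append]; abel, hT.trans hvis⟩
  | zero => exact ⟨x, rfl, (add_zero _).symm, hT⟩
  | add v w _ _ ihv ihw =>
    obtain ⟨x₁, h₁, h₁', hT₁⟩ := ihv hT
    obtain ⟨x₂, h₂, h₂', hT₂⟩ := ihw hT₁
    exact ⟨x₂, h₂.trans h₁, by rw [h₂', h₁', add_assoc], hT₂⟩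

lemma zero_notMem_cycleLinSet_toSet (hM : ∀ w ∈ M.accepts, w ∉ ZDyck n) {K : ℕ}
    {s : List (Sig n)} (hs : M.eval s ∈ M.accept) :
    (0 : Fin n → ℤ) ∉ (cycleLinSet M K s).toSet := by
  rintro ⟨v, hv, h0⟩
  obtain ⟨x, hx, hxv, -⟩ := exists_eval_eq_wordEff_add M hv subset_rfl
  exact hM x (by rwa [DFA.mem_accepts, hx]) (hxv.trans h0.symm)

/-- The approximation automaton can read `u` keeping its counter at the effect of a reduced run
`s`: whenever appending a letter breaks reducedness, the cycle just closed is cut out of `s` by an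
ε-move. -/
lemma exists_isReduced_kReach [Finite σ] {K : ℕ} (hK : Nat.card (Set σ × σ) ≤ K)
    (u : List (Sig n)) :
    ∃ s, M.IsReduced s ∧ M.eval s = M.eval u ∧ M.visited s = M.visited u ∧
      ∀ L : LinSet n, cycleEffects M K (M.visited u) ⊆ L.periods →
        KReach L K 0 u (wordEff s) := by
  induction u using List.reverseRecOn with
  | nil => exact ⟨[], DFA.isReduced_nil, rfl, rfl, fun _ _ => .refl _ (inBox_zero K)⟩
  | append_singleton u a ih =>
    obtain ⟨s, hs, heval, hvis, hreach⟩ := ih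
    have hlen : s.length + 1 ≤ K := hs.length_lt.trans_le hK
    have heval' : M.eval (s ++ [a]) = M.eval (u ++ [a]) := by
      simp only [DFA.eval_append_singleton, heval]
    have hvis' : M.visited (s ++ [a]) = M.visited (u ++ [a]) := by
      rw [DFA.visited_append, DFA.visited_append, hvis, heval]
    have hmono : M.visited u ⊆ M.visited (u ++ [a]) := by
      rw [DFA.visited_append]
      exact Set.subset_union_left
    have hbox : inBox K (wordEff (s ++ [a])) := inBox_wordEff (by simpa using hlen)
    have hstep (L : LinSet n) (hL : cycleEffects M K (M.visited (u ++ [a])) ⊆ L.periods) :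
        KReach L K 0 (u ++ [a]) (wordEff (s ++ [a])) := by
      rw [wordEff_append, wordEff_cons, wordEff_nil, add_zero] at hbox ⊢
      exact (hreach L ((cycleEffects_mono M K hmono).trans hL)).append
        (.letter a (inBox_wordEff (by omega)) hbox (.refl _ hbox))
    rcases hs.append_singleton_or a with hs' | ⟨p, ⟨c, rfl⟩, hpv, hpe⟩
    · exact ⟨s ++ [a], hs', heval', hvis', hstep⟩
    · refine ⟨p, hs.of_prefix ⟨c, rfl⟩, hpe.trans heval', hpv.trans hvis', fun L hL => ?_⟩
      have hcyc : wordEff (c ++ [a]) ∈ L.periods := by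
        refine hL ⟨M.eval p, hvis' ▸ hpv ▸ M.eval_mem_visited p, c ++ [a], ?_, ?_, rfl⟩
        · simp only [List.length_append, List.length_singleton] at hlen ⊢
          omega
        · calc M.evalFrom (M.eval p) (c ++ [a]) = M.eval (p ++ c ++ [a]) := by
                rw [List.append_assoc]
                exact (M.evalFrom_of_append _ _ _).symm
            _ = M.eval p := hpe.symm
      have hbox' : inBox K (wordEff (p ++ c ++ [a]) - wordEff (c ++ [a])) := by
        simpa [List.append_assoc] using inBox_wordEff (k := K) (w := p) (by
          simp only [List.length_append] at hlen
          omega)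
      simpa [List.append_assoc] using (hstep L hL).append (.eps hcyc hbox hbox' (.refl _ hbox'))

lemma exists_finite_RFam_one_cover [Finite σ] (hM : ∀ w ∈ M.accepts, w ∉ ZDyck n) :
    ∃ F ⊆ RFam n 1, F.Finite ∧ ∀ w ∈ M.accepts, ∃ K ∈ F, w ∈ K := by
  set K := Nat.card (Set σ × σ)
  refine ⟨(fun s => KApprox (cycleLinSet M K s) K) '' {s | s.length ≤ K ∧ M.eval s ∈ M.accept},
    ?_, ?_, fun w hw => ?_⟩
  · rintro _ ⟨s, ⟨-, hs⟩, rfl⟩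
    exact mem_RFam_one_iff.mpr ⟨K, _, zero_notMem_cycleLinSet_toSet M hM hs, rfl⟩
  · exact ((List.finite_length_le _ K).subset fun s hs => hs.1).image _
  · obtain ⟨s, hs, heval, hvis, hreach⟩ := exists_isReduced_kReach M le_rfl w
    refine ⟨_, ⟨s, ⟨hs.length_lt.le, heval ▸ hw⟩, rfl⟩, wordEff s, ?_, 0, zero_mem _, ?_⟩
    · exact hreach _ fun v hv => by rwa [← hvis] at hv
    · exact (add_zero _).symm

end Covering

theorem stmt11_general (n : ℕ) : IsBasicSepSet (ZDyck n) (RFam n 1) := by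
  refine ⟨fun K hK => ?_, fun L hL hdisj => ?_⟩
  · obtain ⟨k, L, h0, rfl⟩ := mem_RFam_one_iff.mp hK
    exact ⟨KApprox_isRegular L k, KApprox_disjoint_ZDyck h0⟩
  · obtain ⟨σ, _, M, rfl⟩ := hL
    exact exists_finite_RFam_one_cover M hdisj

theorem stmt11 (n : ℕ) (hn : 1 ≤ n) : IsBasicSepSet (ZDyck n) (RFam n 1) :=
  stmt11_general n
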